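/- Let K ≥ 1, U₁, …, U_K ∈ ℝ^{h×l}, v*, ṽ₁, …, ṽ_K ∈ ℝ^h, set vᵢ = v* + ṽᵢ, Ū = (1/K)∑_{i=1}^K Uᵢ, and v̄ = (1/K)∑_{i=1}^K vᵢ. Then for every x ∈ ℝ^l: |v̄ᵀσ(Ū x) − (1/K)∑_{i=1}^K vᵢᵀσ(Uᵢ x)| ≤ (1/K²) ∑_{i=1}^K (‖ṽᵢ‖₂ + ‖v*‖₂) ∑_{j ≠ i} ‖(U_j − Uᵢ)x‖₂. -/

import Mathlib

/-- The Euclidean (ℓ²) norm of a vector in `Fin n → ℝ`. -/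
noncomputable def l2norm {n : ℕ} (v : Fin n → ℝ) : ℝ :=
  Real.sqrt (∑ i, (v i) ^ 2)

/-- The two-layer ReLU network `f_{v,U}(x) = vᵀ σ(U x)`. -/
noncomputable def net {hd ld : ℕ} (U : Fin hd → Fin ld → ℝ) (v : Fin hd → ℝ)
    (x : Fin ld → ℝ) : ℝ :=
  ∑ i, v i * max 0 (∑ j, U i j * x j)

/-! Averaging the output weights makes the averaged network a mean of the networks
`vₖᵀσ(Ū x)`, so the deviation is the mean of `vₖᵀ(σ(Ū x) − σ(Uₖ x))`. By Cauchy–Schwarz and the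
1-Lipschitzness of ReLU each term is at most `‖vₖ‖₂ ‖Ū x − Uₖ x‖₂`, and
`Ū x − Uₖ x = (1/K) ∑_{j ≠ k} (U_j − Uₖ) x`. -/

open Finset Matrix

section AverageDeviation

variable {ι E : Type*} [Fintype ι] [DecidableEq ι]

theorem average_sub_eq_average_erase_sub [AddCommGroup E] [Module ℝ E] (b : ι → E) (k : ι) :
    (Fintype.card ι : ℝ)⁻¹ • ∑ j, b j - b k
      = (Fintype.card ι : ℝ)⁻¹ • ∑ j ∈ univ.erase k, (b j - b k) := by
  have hcard : (Fintype.card ι : ℝ) ≠ 0 := Nat.cast_ne_zero.mpr (Fintype.card_pos_iff.mpr ⟨k⟩).ne'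
  rw [sum_erase _ (sub_self _), sum_sub_distrib, sum_const, card_univ, smul_sub,
    ← Nat.cast_smul_eq_nsmul ℝ, smul_smul, inv_mul_cancel₀ hcard, one_smul]

theorem norm_average_sub_le [SeminormedAddCommGroup E] [NormedSpace ℝ E] (b : ι → E) (k : ι) :
    ‖(Fintype.card ι : ℝ)⁻¹ • ∑ j, b j - b k‖
      ≤ (Fintype.card ι : ℝ)⁻¹ * ∑ j ∈ univ.erase k, ‖b j - b k‖ := by
  rw [average_sub_eq_average_erase_sub, norm_smul, Real.norm_of_nonneg (by positivity)]
  gcongr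
  exact norm_sum_le _ _

end AverageDeviation

section L2Norm

variable {n : ℕ}

theorem l2norm_eq_norm_toLp (v : Fin n → ℝ) : l2norm v = ‖WithLp.toLp 2 v‖ := by
  simp [EuclideanSpace.norm_eq, l2norm]

theorem l2norm_nonneg (v : Fin n → ℝ) : 0 ≤ l2norm v := Real.sqrt_nonneg _

theorem abs_sum_mul_le_l2norm_mul_l2norm (v w : Fin n → ℝ) :
    |∑ i, v i * w i| ≤ l2norm v * l2norm w := by
  simpa [l2norm_eq_norm_toLp, PiLp.inner_apply, mul_comm] using
    abs_real_inner_le_norm (WithLp.toLp 2 v) (WithLp.toLp 2 w)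

theorem l2norm_add_le (v w : Fin n → ℝ) : l2norm (v + w) ≤ l2norm v + l2norm w := by
  simpa only [l2norm_eq_norm_toLp, WithLp.toLp_add] using norm_add_le _ _

theorem LipschitzWith.l2norm_comp_sub_le {φ : ℝ → ℝ} (hφ : LipschitzWith 1 φ) (a b : Fin n → ℝ) :
    l2norm (fun i => φ (a i) - φ (b i)) ≤ l2norm (a - b) := by
  refine Real.sqrt_le_sqrt (sum_le_sum fun i _ => sq_le_sq.mpr ?_)
  simpa [← Real.dist_eq] using hφ.dist_le_mul (a i) (b i)

theorem l2norm_average_sub_le {ι : Type*} [Fintype ι] [DecidableEq ι] (b : ι → Fin n → ℝ)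
    (k : ι) :
    l2norm ((Fintype.card ι : ℝ)⁻¹ • ∑ j, b j - b k)
      ≤ (Fintype.card ι : ℝ)⁻¹ * ∑ j ∈ univ.erase k, l2norm (b j - b k) := by
  simpa only [l2norm_eq_norm_toLp, WithLp.toLp_sub, WithLp.toLp_smul, WithLp.toLp_sum] using
    norm_average_sub_le (fun j => WithLp.toLp 2 (b j)) k

end L2Norm

section Network

variable {hd ld : ℕ}

theorem net_eq_sum_relu_mulVec (U : Fin hd → Fin ld → ℝ) (v : Fin hd → ℝ) (x : Fin ld → ℝ) :
    net U v x = ∑ i, v i * max 0 ((U *ᵥ x) i) := rfl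

theorem net_smul_sum_weights {ι : Type*} (s : Finset ι) (c : ℝ) (U : Fin hd → Fin ld → ℝ)
    (v : ι → Fin hd → ℝ) (x : Fin ld → ℝ) :
    net U (c • ∑ k ∈ s, v k) x = c * ∑ k ∈ s, net U (v k) x := by
  simp only [net, Pi.smul_apply, Finset.sum_apply, smul_eq_mul, mul_sum, sum_mul]
  exact sum_comm.trans (sum_congr rfl fun _ _ => sum_congr rfl fun _ _ => by ring)

theorem abs_net_sub_net_le (W U : Fin hd → Fin ld → ℝ) (v : Fin hd → ℝ) (x : Fin ld → ℝ) :
    |net W v x - net U v x| ≤ l2norm v * l2norm (W *ᵥ x - U *ᵥ x) := by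
  have hrelu : LipschitzWith 1 (fun t : ℝ => max 0 t) := LipschitzWith.id.const_max 0
  calc |net W v x - net U v x|
      = |∑ i, v i * (max 0 ((W *ᵥ x) i) - max 0 ((U *ᵥ x) i))| := by
        simp only [net_eq_sum_relu_mulVec, ← sum_sub_distrib, mul_sub]
    _ ≤ l2norm v * l2norm (fun i => max 0 ((W *ᵥ x) i) - max 0 ((U *ᵥ x) i)) :=
        abs_sum_mul_le_l2norm_mul_l2norm _ _
    _ ≤ l2norm v * l2norm (W *ᵥ x - U *ᵥ x) := by
        gcongr
        · exact l2norm_nonneg v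
        · exact hrelu.l2norm_comp_sub_le _ _

end Network

theorem group_deviation_deterministic_bound_general {hd ld : ℕ}
    (K : ℕ)
    (U : Fin K → Fin hd → Fin ld → ℝ) (vstar : Fin hd → ℝ)
    (vt : Fin K → Fin hd → ℝ) (x : Fin ld → ℝ) :
    |net ((K : ℝ)⁻¹ • ∑ k, U k) ((K : ℝ)⁻¹ • ∑ k, (vstar + vt k)) x
      - (K : ℝ)⁻¹ * ∑ k, net (U k) (vstar + vt k) x|
    ≤ ((K : ℝ) ^ 2)⁻¹ * ∑ k, (l2norm (vt k) + l2norm vstar)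
        * ∑ j ∈ Finset.univ.erase k,
            l2norm (fun i => ∑ m, (U j i m - U k i m) * x m) := by
  set Ubar := (K : ℝ)⁻¹ • ∑ k, U k
  have hmean : Ubar *ᵥ x = (K : ℝ)⁻¹ • ∑ k, U k *ᵥ x :=
    (smul_mulVec _ (∑ k, of (U k)) x).trans (congrArg _ (sum_mulVec _ _ _))
  have hsub (j k : Fin K) : (fun i => ∑ m, (U j i m - U k i m) * x m) = U j *ᵥ x - U k *ᵥ x :=
    sub_mulVec (of (U j)) (of (U k)) x
  have hdev (k : Fin K) : l2norm (Ubar *ᵥ x - U k *ᵥ x)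
      ≤ (K : ℝ)⁻¹ * ∑ j ∈ univ.erase k, l2norm (U j *ᵥ x - U k *ᵥ x) := by
    simpa only [hmean, Fintype.card_fin] using l2norm_average_sub_le (fun j => U j *ᵥ x) k
  simp only [hsub]
  calc _ = |(K : ℝ)⁻¹ * ∑ k, (net Ubar (vstar + vt k) x - net (U k) (vstar + vt k) x)| := by
        rw [net_smul_sum_weights, sum_sub_distrib, mul_sub]
    _ ≤ (K : ℝ)⁻¹ * ∑ k, |net Ubar (vstar + vt k) x - net (U k) (vstar + vt k) x| := by
        rw [abs_mul, abs_of_nonneg (by positivity)]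
        gcongr
        exact abs_sum_le_sum_abs _ _
    _ ≤ (K : ℝ)⁻¹ * ∑ k, (l2norm (vt k) + l2norm vstar) * ((K : ℝ)⁻¹ *
          ∑ j ∈ univ.erase k, l2norm (U j *ᵥ x - U k *ᵥ x)) := by
        gcongr with k
        refine (abs_net_sub_net_le _ _ _ _).trans (mul_le_mul ?_ (hdev k) ?_ ?_)
        · exact add_comm vstar (vt k) ▸ l2norm_add_le _ _
        · exact l2norm_nonneg _
        · exact add_nonneg (l2norm_nonneg _) (l2norm_nonneg _)
    _ = _ := by
        rw [mul_sum, mul_sum]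
        exact sum_congr rfl fun _ _ => by ring

/-- deterministic core of the proof of Theorem 2.
With `vᵢ = v* + ṽᵢ`, `Ū = (1/K)∑ Uᵢ`, `v̄ = (1/K)∑ vᵢ`, for every `x`:
`|v̄ᵀσ(Ūx) − (1/K)∑ vᵢᵀσ(Uᵢx)|
  ≤ (1/K²) ∑ᵢ (‖ṽᵢ‖₂ + ‖v*‖₂) ∑_{j≠i} ‖(U_j − Uᵢ)x‖₂`. -/
theorem group_deviation_deterministic_bound {hd ld : ℕ}
    (K : ℕ) (hK : 1 ≤ K)
    (U : Fin K → Fin hd → Fin ld → ℝ) (vstar : Fin hd → ℝ)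
    (vt : Fin K → Fin hd → ℝ) (x : Fin ld → ℝ) :
    |net ((K : ℝ)⁻¹ • ∑ k, U k) ((K : ℝ)⁻¹ • ∑ k, (vstar + vt k)) x
      - (K : ℝ)⁻¹ * ∑ k, net (U k) (vstar + vt k) x|
    ≤ ((K : ℝ) ^ 2)⁻¹ * ∑ k, (l2norm (vt k) + l2norm vstar)
        * ∑ j ∈ Finset.univ.erase k,
            l2norm (fun i => ∑ m, (U j i m - U k i m) * x m) :=
  group_deviation_deterministic_bound_general K U vstar vt x
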